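/- arXiv:2010.06250 — 2 statements merged into one kernel-verified Lean document; each statement's English description precedes it below -/
import Mathlib

section
/- (Theorem 2, expected local regret of the time-smoothed online stochastic prox-grad method.) Let g : ℝⁿ → ℝ ∪ {+∞} be proper, convex and lower semicontinuous, η > 0, δ > 0, σ > 0, T ≥ 1, w ∈ {1, …, T}, and let f_t : ℝⁿ → ℝ (t = 1, …, T, with f_t ≡ 0 for t ≤ 0) be differentiable. Let (Ω, F, P) be a probability space and, for each t = 1, …, T, let x_t, a_t, d_t, e_t, e'_t : Ω → ℝⁿ be square-integrable random vectors with x_t valued in dom g, satisfying almost surely: (i) ‖P_η^g(x_t; a_t)‖ ≤ δ/w; (ii) d_t = a_t + (1/w)(e_t − e'_t); and in expectation: (iii) E[‖e_t − ∇f_t(x_t)‖²] ≤ σ²/w² and E[‖e'_t − ∇f_{t−w}(x_t)‖²] ≤ σ²/w²; (iv) E[‖d_t − ∇S_{t,w}(x_t)‖²] ≤ σ²/w². Then the expected local regret satisfies E[Σ_{t=1}^T ‖P_η^g(x_t; ∇S_{t,w}(x_t))‖²] ≤ (4T/w²)·(δ² + 7σ²) + (12/w²)·E[Σ_{t=1}^T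 ‖∇f_t(x_t) − ∇f_{t−w}(x_t)‖²]. -/
noncomputable section

open Finset MeasureTheory
open scoped RealInnerProductSpace

/-- `g : ℝⁿ → ℝ ∪ {+∞}` is proper, convex and lower semicontinuous. -/
def ProperConvexLsc {n : ℕ} (g : EuclideanSpace ℝ (Fin n) → WithTop ℝ) : Prop :=
  (∃ x, g x ≠ ⊤) ∧ LowerSemicontinuous g ∧
    ∀ x y : EuclideanSpace ℝ (Fin n), ∀ a b : ℝ, 0 ≤ a → 0 ≤ b → a + b = 1 →
      g (a • x + b • y) ≤ (a : WithTop ℝ) * g x + (b : WithTop ℝ) * g y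

/-- `p` is a minimizer of `z ↦ η·g(z) + ½‖u − z‖²`. -/
def IsProxPt {n : ℕ} (g : EuclideanSpace ℝ (Fin n) → WithTop ℝ) (η : ℝ)
    (u p : EuclideanSpace ℝ (Fin n)) : Prop :=
  ∀ z : EuclideanSpace ℝ (Fin n),
    (η : WithTop ℝ) * g p + ((1 / 2 * ‖u - p‖ ^ 2 : ℝ) : WithTop ℝ) ≤
      (η : WithTop ℝ) * g z + ((1 / 2 * ‖u - z‖ ^ 2 : ℝ) : WithTop ℝ)

/-- `prox` is the proximal operator of `ηg`: `prox u` is the unique minimizer of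
`z ↦ η·g(z) + ½‖u − z‖²`. -/
def IsProxFun {n : ℕ} (g : EuclideanSpace ℝ (Fin n) → WithTop ℝ) (η : ℝ)
    (prox : EuclideanSpace ℝ (Fin n) → EuclideanSpace ℝ (Fin n)) : Prop :=
  ∀ u, IsProxPt g η u (prox u) ∧ ∀ q, IsProxPt g η u q → q = prox u

/-- The prox-grad residual `P_η^g(x; d) = (x − prox_{ηg}(x − η d))/η`. -/
def proxRes {n : ℕ} (prox : EuclideanSpace ℝ (Fin n) → EuclideanSpace ℝ (Fin n)) (η : ℝ)
    (x d : EuclideanSpace ℝ (Fin n)) : EuclideanSpace ℝ (Fin n) :=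
  η⁻¹ • (x - prox (x - η • d))

/-!
The proximal map of a proper convex function is nonexpansive: its optimality condition makes
`(u - prox u)/η` a subgradient at `prox u`, and subgradients are monotone. Hence the residual
`P_η^g(x; ·)` is 1-Lipschitz, so the residual at the true smoothed gradient is at most the
inner-loop residual `δ/w` plus `‖∇S_{t,w}(x_t) - a_t‖`. The update `d_t = a_t + (e_t - e'_t)/w`
splits this distance into the error of `d_t`, the errors of `e_t` and `e'_t`, and the drift
`∇f_t - ∇f_{t-w}`; squaring with `(α₁ + ⋯ + α_k)² ≤ k (α₁² + ⋯ + α_k²)` and taking expectations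
bounds each term by the variance assumptions.
-/

open Filter Topology

section Prox

variable {n : ℕ} {g : EuclideanSpace ℝ (Fin n) → WithTop ℝ} {η : ℝ}
  {u p q : EuclideanSpace ℝ (Fin n)}

theorem IsProxPt.ne_top (hg : ProperConvexLsc g) (hη : 0 < η) (hp : IsProxPt g η u p) :
    g p ≠ ⊤ := by
  obtain ⟨z, hz⟩ := hg.1
  intro htop
  have hle := hp z
  rw [htop, WithTop.mul_top (by exact_mod_cast hη.ne'), WithTop.top_add, top_le_iff] at hle
  lift g z to ℝ using hz with gz
  exact (WithTop.add_ne_top.2 ⟨WithTop.mul_ne_top WithTop.coe_ne_top WithTop.coe_ne_top,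
    WithTop.coe_ne_top⟩) hle

theorem IsProxPt.le_of_eq_coe (hp : IsProxPt g η u p) {z : EuclideanSpace ℝ (Fin n)}
    {gp gz : ℝ} (hgp : g p = gp) (hgz : g z = gz) :
    η * gp + 1 / 2 * ‖u - p‖ ^ 2 ≤ η * gz + 1 / 2 * ‖u - z‖ ^ 2 := by
  have h := hp z
  rw [hgp, hgz] at h
  exact_mod_cast h

/-- The optimality condition `(u - p)/η ∈ ∂g(p)` of the proximal point `p`, tested at `q`. -/
theorem IsProxPt.mul_sub_add_inner_nonpos (hg : ProperConvexLsc g) (hη : 0 ≤ η)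
    (hp : IsProxPt g η u p) {gp gq : ℝ} (hgp : g p = gp) (hgq : g q = gq) :
    η * (gp - gq) + ⟪u - p, q - p⟫ ≤ 0 := by
  have hsegment : ∀ t ∈ Set.Ioc (0 : ℝ) 1,
      η * (gp - gq) + ⟪u - p, q - p⟫ ≤ t / 2 * ‖q - p‖ ^ 2 := by
    rintro t ⟨ht0, ht1⟩
    have hconv : g ((1 - t) • p + t • q) ≤ ((1 - t) * gp + t * gq : ℝ) := by
      simpa [hgp, hgq] using hg.2.2 p q (1 - t) t (by linarith) ht0.le (by ring)
    obtain ⟨gz, hgz⟩ := WithTop.ne_top_iff_exists.mp (ne_top_of_le_ne_top WithTop.coe_ne_top hconv)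
    rw [← hgz] at hconv
    have hgz_le : gz ≤ (1 - t) * gp + t * gq := by exact_mod_cast hconv
    have hmin := hp.le_of_eq_coe hgp hgz.symm
    have hnorm : ‖u - ((1 - t) • p + t • q)‖ ^ 2 =
        ‖u - p‖ ^ 2 - 2 * t * ⟪u - p, q - p⟫ + t ^ 2 * ‖q - p‖ ^ 2 := by
      rw [show u - ((1 - t) • p + t • q) = (u - p) - t • (q - p) by module, norm_sub_sq_real,
        real_inner_smul_right, norm_smul, Real.norm_of_nonneg ht0.le]
      ring
    rw [hnorm] at hmin
    have hscaled : t * (η * (gp - gq) + ⟪u - p, q - p⟫) ≤ t * (t / 2 * ‖q - p‖ ^ 2) := by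
      nlinarith [mul_le_mul_of_nonneg_left hgz_le hη]
    exact le_of_mul_le_mul_left hscaled ht0
  have hlim : Tendsto (fun t : ℝ => t / 2 * ‖q - p‖ ^ 2) (𝓝[>] 0) (𝓝 0) :=
    tendsto_nhdsWithin_of_tendsto_nhds (by simpa using
      ((continuous_id.div_const 2).mul_const (‖q - p‖ ^ 2)).tendsto 0)
  exact ge_of_tendsto hlim (eventually_of_mem (Ioc_mem_nhdsGT one_pos) hsegment)

theorem IsProxFun.lipschitzWith {prox : EuclideanSpace ℝ (Fin n) → EuclideanSpace ℝ (Fin n)}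
    (hg : ProperConvexLsc g) (hη : 0 < η) (hprox : IsProxFun g η prox) :
    LipschitzWith 1 prox := by
  refine LipschitzWith.of_dist_le_mul fun u v => ?_
  obtain ⟨gp, hgp⟩ := WithTop.ne_top_iff_exists.mp ((hprox u).1.ne_top hg hη)
  obtain ⟨gq, hgq⟩ := WithTop.ne_top_iff_exists.mp ((hprox v).1.ne_top hg hη)
  have hu := (hprox u).1.mul_sub_add_inner_nonpos hg hη.le hgp.symm hgq.symm
  have hv := (hprox v).1.mul_sub_add_inner_nonpos hg hη.le hgq.symm hgp.symm
  have hfirm : ‖prox u - prox v‖ ^ 2 ≤ ⟪u - v, prox u - prox v⟫ := by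
    have hsum : ⟪u - prox u, prox v - prox u⟫ + ⟪v - prox v, prox u - prox v⟫ =
        ‖prox u - prox v‖ ^ 2 - ⟪u - v, prox u - prox v⟫ := by
      rw [← real_inner_self_eq_norm_sq]
      simp only [inner_sub_left, inner_sub_right, real_inner_comm (prox u) (prox v)]
      ring
    linarith
  have hcs := real_inner_le_norm (u - v) (prox u - prox v)
  rw [NNReal.coe_one, one_mul, dist_eq_norm, dist_eq_norm]
  nlinarith [norm_nonneg (prox u - prox v), norm_nonneg (u - v)]

end Prox

section NormBounds

variable {E : Type*} [SeminormedAddGroup E]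

theorem norm_add₃_sq_le (a b c : E) :
    ‖a + b + c‖ ^ 2 ≤ 3 * (‖a‖ ^ 2 + ‖b‖ ^ 2 + ‖c‖ ^ 2) := by
  have h := norm_add₃_le (a := a) (b := b) (c := c)
  nlinarith [norm_nonneg (a + b + c), sq_nonneg (‖a‖ - ‖b‖), sq_nonneg (‖b‖ - ‖c‖),
    sq_nonneg (‖a‖ - ‖c‖)]

theorem norm_add_sq_le (a b : E) : ‖a + b‖ ^ 2 ≤ 2 * (‖a‖ ^ 2 + ‖b‖ ^ 2) :=
  (pow_le_pow_left₀ (norm_nonneg _) (norm_add_le a b) 2).trans add_sq_le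

end NormBounds

section ProxRes

variable {n : ℕ} {prox : EuclideanSpace ℝ (Fin n) → EuclideanSpace ℝ (Fin n)} {η : ℝ}

theorem norm_proxRes_sub_proxRes_le (hprox : LipschitzWith 1 prox) (hη : 0 < η)
    (x d a : EuclideanSpace ℝ (Fin n)) :
    ‖proxRes prox η x d - proxRes prox η x a‖ ≤ ‖d - a‖ := by
  have hlip := hprox.norm_sub_le (x - η • a) (x - η • d)
  rw [NNReal.coe_one, one_mul, show (x - η • a) - (x - η • d) = η • (d - a) by module,
    norm_smul, Real.norm_of_nonneg hη.le] at hlip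
  calc ‖proxRes prox η x d - proxRes prox η x a‖
      = η⁻¹ * ‖prox (x - η • a) - prox (x - η • d)‖ := by
        rw [proxRes, proxRes, ← smul_sub, norm_smul, Real.norm_of_nonneg (inv_nonneg.2 hη.le)]
        congr 2; abel
    _ ≤ η⁻¹ * (η * ‖d - a‖) := by gcongr
    _ = ‖d - a‖ := by field_simp

theorem norm_proxRes_sq_le (hprox : LipschitzWith 1 prox) (hη : 0 < η) {r : ℝ}
    {x a d e e' F F' D : EuclideanSpace ℝ (Fin n)} (hd : d = a + r • (e - e')) :
    ‖proxRes prox η x D‖ ^ 2 ≤ 2 * ‖proxRes prox η x a‖ ^ 2 + 4 * ‖d - D‖ ^ 2 +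
      12 * r ^ 2 * (‖e - F‖ ^ 2 + ‖e' - F'‖ ^ 2 + ‖F - F'‖ ^ 2) := by
  have hres : ‖proxRes prox η x D‖ ^ 2 ≤ 2 * (‖proxRes prox η x a‖ ^ 2 + ‖D - a‖ ^ 2) := by
    have h := (norm_le_norm_add_norm_sub' (proxRes prox η x D) (proxRes prox η x a)).trans
      (add_le_add_right (norm_proxRes_sub_proxRes_le hprox hη x D a) _)
    exact (pow_le_pow_left₀ (norm_nonneg _) h 2).trans add_sq_le
  have hupd : ‖D - a‖ ^ 2 ≤ 2 * (‖d - D‖ ^ 2 + r ^ 2 * ‖e - e'‖ ^ 2) := by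
    have := norm_add_sq_le (D - d) (r • (e - e'))
    rwa [norm_sub_rev D d, norm_smul, mul_pow, Real.norm_eq_abs, sq_abs,
      show D - d + r • (e - e') = D - a by rw [hd]; abel] at this
  have hnoise : ‖e - e'‖ ^ 2 ≤ 3 * (‖e - F‖ ^ 2 + ‖e' - F'‖ ^ 2 + ‖F - F'‖ ^ 2) := by
    have := norm_add₃_sq_le (e - F) (F - F') (F' - e')
    rwa [norm_sub_rev F' e', show e - F + (F - F') + (F' - e') = e - e' by abel,
      add_right_comm (‖e - F‖ ^ 2)] at this
  nlinarith [sq_nonneg r]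

end ProxRes

section Expectation

open MeasureTheory

variable {n : ℕ} {prox : EuclideanSpace ℝ (Fin n) → EuclideanSpace ℝ (Fin n)} {η : ℝ}
  {Ω : Type*} [MeasurableSpace Ω] {μ : Measure Ω} {ι : Type*}

theorem MeasureTheory.MemLp.integrable_norm_sub_sq {E : Type*} [NormedAddCommGroup E] {f g : Ω → E}
    (hf : MemLp f 2 μ) (hg : MemLp g 2 μ) : Integrable (fun ω => ‖f ω - g ω‖ ^ 2) μ :=
  (hf.sub hg).norm.integrable_sq

theorem integral_const_add_mul_add_mul_le [IsProbabilityMeasure μ] {b k₁ k₂ v : ℝ}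
    (hk₁ : 0 ≤ k₁) (hk₂ : 0 ≤ k₂) {X₁ X₂ X₃ X₄ : Ω → ℝ} (h₁ : Integrable X₁ μ)
    (h₂ : Integrable X₂ μ) (h₃ : Integrable X₃ μ) (h₄ : Integrable X₄ μ)
    (hX₁ : ∫ ω, X₁ ω ∂μ ≤ v) (hX₂ : ∫ ω, X₂ ω ∂μ ≤ v) (hX₃ : ∫ ω, X₃ ω ∂μ ≤ v) :
    ∫ ω, (b + k₁ * X₁ ω + k₂ * (X₂ ω + X₃ ω + X₄ ω)) ∂μ ≤
      b + k₁ * v + 2 * k₂ * v + k₂ * ∫ ω, X₄ ω ∂μ := by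
  rw [integral_add (by fun_prop) (by fun_prop), integral_add (by fun_prop) (by fun_prop),
    integral_const, integral_const_mul, integral_const_mul, integral_add (by fun_prop) h₄,
    integral_add h₂ h₃, probReal_univ, one_smul]
  nlinarith

theorem integral_sum_norm_proxRes_sq_le [IsProbabilityMeasure μ] (hprox : LipschitzWith 1 prox)
    (hη : 0 < η) (s : Finset ι) {x a d e e' F F' D : ι → Ω → EuclideanSpace ℝ (Fin n)}
    {c r v : ℝ}
    (hdD : ∀ t ∈ s, Integrable (fun ω => ‖d t ω - D t ω‖ ^ 2) μ)
    (heF : ∀ t ∈ s, Integrable (fun ω => ‖e t ω - F t ω‖ ^ 2) μ)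
    (he'F' : ∀ t ∈ s, Integrable (fun ω => ‖e' t ω - F' t ω‖ ^ 2) μ)
    (hFF' : ∀ t ∈ s, Integrable (fun ω => ‖F t ω - F' t ω‖ ^ 2) μ)
    (hstop : ∀ t ∈ s, ∀ᵐ ω ∂μ, ‖proxRes prox η (x t ω) (a t ω)‖ ≤ c)
    (hupd : ∀ t ∈ s, ∀ᵐ ω ∂μ, d t ω = a t ω + r • (e t ω - e' t ω))
    (hd : ∀ t ∈ s, ∫ ω, ‖d t ω - D t ω‖ ^ 2 ∂μ ≤ v)
    (he : ∀ t ∈ s, ∫ ω, ‖e t ω - F t ω‖ ^ 2 ∂μ ≤ v)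
    (he' : ∀ t ∈ s, ∫ ω, ‖e' t ω - F' t ω‖ ^ 2 ∂μ ≤ v) :
    ∫ ω, ∑ t ∈ s, ‖proxRes prox η (x t ω) (D t ω)‖ ^ 2 ∂μ ≤
      #s * (2 * c ^ 2 + 4 * v + 24 * r ^ 2 * v) +
        12 * r ^ 2 * ∫ ω, ∑ t ∈ s, ‖F t ω - F' t ω‖ ^ 2 ∂μ := by
  obtain ⟨B, hB_def⟩ : ∃ B : ι → Ω → ℝ, B = fun t ω => 2 * c ^ 2 + 4 * ‖d t ω - D t ω‖ ^ 2 +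
    12 * r ^ 2 * (‖e t ω - F t ω‖ ^ 2 + ‖e' t ω - F' t ω‖ ^ 2 + ‖F t ω - F' t ω‖ ^ 2) := ⟨_, rfl⟩
  have hB_int : ∀ t ∈ s, Integrable (B t) μ := fun t ht => by
    subst hB_def
    exact ((integrable_const _).add ((hdD t ht).const_mul 4)).add
      ((((heF t ht).add (he'F' t ht)).add (hFF' t ht)).const_mul _)
  have hB : ∀ t ∈ s, ∫ ω, B t ω ∂μ ≤
      2 * c ^ 2 + 4 * v + 24 * r ^ 2 * v + 12 * r ^ 2 * ∫ ω, ‖F t ω - F' t ω‖ ^ 2 ∂μ := by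
    intro t ht
    subst hB_def
    exact integral_const_add_mul_add_mul_le (by norm_num) (by positivity) (hdD t ht) (heF t ht)
      (he'F' t ht) (hFF' t ht) (hd t ht) (he t ht) (he' t ht) |>.trans_eq (by ring)
  have hpointwise : ∀ᵐ ω ∂μ, ∑ t ∈ s, ‖proxRes prox η (x t ω) (D t ω)‖ ^ 2 ≤ ∑ t ∈ s, B t ω := by
    have hall : ∀ᵐ ω ∂μ, ∀ t ∈ s, ‖proxRes prox η (x t ω) (a t ω)‖ ≤ c ∧
        d t ω = a t ω + r • (e t ω - e' t ω) := by
      rw [eventually_all_finset]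
      exact fun t ht => (hstop t ht).and (hupd t ht)
    filter_upwards [hall] with ω hω
    refine sum_le_sum fun t ht =>
      (norm_proxRes_sq_le (F := F t ω) (F' := F' t ω) hprox hη (hω t ht).2).trans ?_
    have := pow_le_pow_left₀ (norm_nonneg _) (hω t ht).1 2
    simp only [hB_def]
    linarith
  calc ∫ ω, ∑ t ∈ s, ‖proxRes prox η (x t ω) (D t ω)‖ ^ 2 ∂μ
      ≤ ∫ ω, ∑ t ∈ s, B t ω ∂μ :=
        integral_mono_of_nonneg (ae_of_all _ fun ω => by positivity)
          (integrable_finsetSum _ hB_int) hpointwise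
    _ = ∑ t ∈ s, ∫ ω, B t ω ∂μ := integral_finsetSum _ hB_int
    _ ≤ _ := sum_le_sum hB
    _ = _ := by rw [sum_add_distrib, sum_const, nsmul_eq_mul, ← mul_sum, integral_finsetSum _ hFF']

end Expectation

theorem stmt11_general {n : ℕ} {Ω : Type*} [MeasurableSpace Ω] (μ : Measure Ω)
    [IsProbabilityMeasure μ]
    (g : EuclideanSpace ℝ (Fin n) → WithTop ℝ) (hg : ProperConvexLsc g)
    (prox : EuclideanSpace ℝ (Fin n) → EuclideanSpace ℝ (Fin n))
    (η δ σ : ℝ) (hη : 0 < η)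
    (hprox : IsProxFun g η prox)
    (T w : ℕ) (hw1 : 1 ≤ w)
    (f' : ℤ → EuclideanSpace ℝ (Fin n) → EuclideanSpace ℝ (Fin n))
    (x a d e e' : ℤ → Ω → EuclideanSpace ℝ (Fin n))
    (hd2 : ∀ t ∈ Finset.Icc (1 : ℤ) T, MemLp (d t) 2 μ)
    (he2 : ∀ t ∈ Finset.Icc (1 : ℤ) T, MemLp (e t) 2 μ)
    (he'2 : ∀ t ∈ Finset.Icc (1 : ℤ) T, MemLp (e' t) 2 μ)
    (hfx2 : ∀ t ∈ Finset.Icc (1 : ℤ) T, ∀ i ∈ Finset.Icc (t - w) t,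
      MemLp (fun ω => f' i (x t ω)) 2 μ)
    (hstop : ∀ t ∈ Finset.Icc (1 : ℤ) T, ∀ᵐ ω ∂μ,
      ‖proxRes prox η (x t ω) (a t ω)‖ ≤ δ / w)
    (hupd : ∀ t ∈ Finset.Icc (1 : ℤ) T, ∀ᵐ ω ∂μ,
      d t ω = a t ω + (w : ℝ)⁻¹ • (e t ω - e' t ω))
    (he : ∀ t ∈ Finset.Icc (1 : ℤ) T,
      ∫ ω, ‖e t ω - f' t (x t ω)‖ ^ 2 ∂μ ≤ σ ^ 2 / w ^ 2)
    (he' : ∀ t ∈ Finset.Icc (1 : ℤ) T,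
      ∫ ω, ‖e' t ω - f' (t - w) (x t ω)‖ ^ 2 ∂μ ≤ σ ^ 2 / w ^ 2)
    (hd : ∀ t ∈ Finset.Icc (1 : ℤ) T,
      ∫ ω, ‖d t ω - (w : ℝ)⁻¹ • ∑ i ∈ Finset.Icc (t - w + 1) t, f' i (x t ω)‖ ^ 2 ∂μ ≤
        σ ^ 2 / w ^ 2) :
    ∫ ω, (∑ t ∈ Finset.Icc (1 : ℤ) T,
        ‖proxRes prox η (x t ω)
            ((w : ℝ)⁻¹ • ∑ i ∈ Finset.Icc (t - w + 1) t, f' i (x t ω))‖ ^ 2) ∂μ ≤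
      4 * (T : ℝ) / w ^ 2 * (δ ^ 2 + 7 * σ ^ 2) +
        12 / (w : ℝ) ^ 2 *
          ∫ ω, (∑ t ∈ Finset.Icc (1 : ℤ) T, ‖f' t (x t ω) - f' (t - w) (x t ω)‖ ^ 2) ∂μ := by
  have hcur : ∀ t ∈ Icc (1 : ℤ) T, MemLp (fun ω => f' t (x t ω)) 2 μ :=
    fun t ht => hfx2 t ht t (by simp only [mem_Icc]; omega)
  have hprev : ∀ t ∈ Icc (1 : ℤ) T, MemLp (fun ω => f' (t - w) (x t ω)) 2 μ :=
    fun t ht => hfx2 t ht (t - w) (by simp only [mem_Icc]; omega)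
  have hD : ∀ t ∈ Icc (1 : ℤ) T,
      MemLp (fun ω => (w : ℝ)⁻¹ • ∑ i ∈ Icc (t - w + 1) t, f' i (x t ω)) 2 μ :=
    fun t ht => (memLp_finsetSum _ fun i hi =>
      hfx2 t ht i (Icc_subset_Icc_left (by omega : t - w ≤ t - w + 1) hi)).const_smul ((w : ℝ)⁻¹)
  refine (integral_sum_norm_proxRes_sq_le (hprox.lipschitzWith hg hη) hη (Icc (1 : ℤ) T)
    (fun t ht => (hd2 t ht).integrable_norm_sub_sq (hD t ht))
    (fun t ht => (he2 t ht).integrable_norm_sub_sq (hcur t ht))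
    (fun t ht => (he'2 t ht).integrable_norm_sub_sq (hprev t ht))
    (fun t ht => (hcur t ht).integrable_norm_sub_sq (hprev t ht)) hstop hupd hd he he').trans ?_
  have hw : (1 : ℝ) ≤ (w : ℝ) ^ 2 := one_le_pow₀ (by exact_mod_cast hw1)
  rw [Int.card_Icc, add_sub_cancel_right, Int.toNat_natCast, inv_pow]
  simp only [← div_eq_mul_inv]
  refine add_le_add ?_ le_rfl
  calc (T : ℝ) * (2 * (δ / w) ^ 2 + 4 * (σ ^ 2 / w ^ 2) + 24 / (w : ℝ) ^ 2 * (σ ^ 2 / w ^ 2))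
      ≤ T * (2 * (δ / w) ^ 2 + 4 * (σ ^ 2 / w ^ 2) + 24 * (σ ^ 2 / w ^ 2)) := by
        gcongr; exact div_le_self (by norm_num) hw
    _ ≤ 4 * T / w ^ 2 * (δ ^ 2 + 7 * σ ^ 2) := by
      rw [div_pow]; field_simp; nlinarith [sq_nonneg δ, (Nat.cast_nonneg T : (0 : ℝ) ≤ T)]

/-- Theorem 2: expected local regret of the time-smoothed online stochastic
prox-grad method.  Here `x_t` are the iterates (valued in `dom g`), `a_t` is the stochastic
gradient estimate of `∇S_{t−1,w}(x_t)` returned by the inner loop (with residual `≤ δ/w`),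
`e_t, e'_t` are stochastic estimates of `∇f_t(x_t)` and `∇f_{t−w}(x_t)`, and
`d_t = a_t + (1/w)(e_t − e'_t)` is the estimate of `∇S_{t,w}(x_t)`. -/
theorem stmt11 {n : ℕ} {Ω : Type*} [MeasurableSpace Ω] (μ : Measure Ω)
    [IsProbabilityMeasure μ]
    (g : EuclideanSpace ℝ (Fin n) → WithTop ℝ) (hg : ProperConvexLsc g)
    (prox : EuclideanSpace ℝ (Fin n) → EuclideanSpace ℝ (Fin n))
    (η δ σ : ℝ) (hη : 0 < η) (hδ : 0 < δ) (hσ : 0 < σ)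
    (hprox : IsProxFun g η prox)
    (T w : ℕ) (hT : 1 ≤ T) (hw1 : 1 ≤ w) (hwT : w ≤ T)
    (f : ℤ → EuclideanSpace ℝ (Fin n) → ℝ)
    (f' : ℤ → EuclideanSpace ℝ (Fin n) → EuclideanSpace ℝ (Fin n))
    (hf0 : ∀ t ≤ (0 : ℤ), ∀ z, f t z = 0) (hf'0 : ∀ t ≤ (0 : ℤ), ∀ z, f' t z = 0)
    (hgrad : ∀ t z, HasGradientAt (f t) (f' t z) z)
    (x a d e e' : ℤ → Ω → EuclideanSpace ℝ (Fin n))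
    (hx2 : ∀ t ∈ Finset.Icc (1 : ℤ) T, MemLp (x t) 2 μ)
    (ha2 : ∀ t ∈ Finset.Icc (1 : ℤ) T, MemLp (a t) 2 μ)
    (hd2 : ∀ t ∈ Finset.Icc (1 : ℤ) T, MemLp (d t) 2 μ)
    (he2 : ∀ t ∈ Finset.Icc (1 : ℤ) T, MemLp (e t) 2 μ)
    (he'2 : ∀ t ∈ Finset.Icc (1 : ℤ) T, MemLp (e' t) 2 μ)
    (hfx2 : ∀ t ∈ Finset.Icc (1 : ℤ) T, ∀ i ∈ Finset.Icc (t - w) t,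
      MemLp (fun ω => f' i (x t ω)) 2 μ)
    (hdom : ∀ t ∈ Finset.Icc (1 : ℤ) T, ∀ᵐ ω ∂μ, g (x t ω) ≠ ⊤)
    (hstop : ∀ t ∈ Finset.Icc (1 : ℤ) T, ∀ᵐ ω ∂μ,
      ‖proxRes prox η (x t ω) (a t ω)‖ ≤ δ / w)
    (hupd : ∀ t ∈ Finset.Icc (1 : ℤ) T, ∀ᵐ ω ∂μ,
      d t ω = a t ω + (w : ℝ)⁻¹ • (e t ω - e' t ω))
    (he : ∀ t ∈ Finset.Icc (1 : ℤ) T,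
      ∫ ω, ‖e t ω - f' t (x t ω)‖ ^ 2 ∂μ ≤ σ ^ 2 / w ^ 2)
    (he' : ∀ t ∈ Finset.Icc (1 : ℤ) T,
      ∫ ω, ‖e' t ω - f' (t - w) (x t ω)‖ ^ 2 ∂μ ≤ σ ^ 2 / w ^ 2)
    (hd : ∀ t ∈ Finset.Icc (1 : ℤ) T,
      ∫ ω, ‖d t ω - (w : ℝ)⁻¹ • ∑ i ∈ Finset.Icc (t - w + 1) t, f' i (x t ω)‖ ^ 2 ∂μ ≤
        σ ^ 2 / w ^ 2) :
    ∫ ω, (∑ t ∈ Finset.Icc (1 : ℤ) T,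
        ‖proxRes prox η (x t ω)
            ((w : ℝ)⁻¹ • ∑ i ∈ Finset.Icc (t - w + 1) t, f' i (x t ω))‖ ^ 2) ∂μ ≤
      4 * (T : ℝ) / w ^ 2 * (δ ^ 2 + 7 * σ ^ 2) +
        12 / (w : ℝ) ^ 2 *
          ∫ ω, (∑ t ∈ Finset.Icc (1 : ℤ) T, ‖f' t (x t ω) - f' (t - w) (x t ω)‖ ^ 2) ∂μ :=
  stmt11_general μ g hg prox η δ σ hη hprox T w hw1 f' x a d e e' hd2 he2 he'2 hfx2 hstop hupd he
    he' hd
end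
end

section
/- (Bounded-error sufficient decrease, key step of Theorem 5.) Let g : ℝⁿ → ℝ ∪ {+∞} be proper, convex and lower semicontinuous, let S : ℝⁿ → ℝ be differentiable and L-smooth on dom g, and let η ∈ (0, 1/(L+1)), δ > 0, σ > 0, w ≥ 1. Let y ∈ dom g and G ∈ ℝⁿ satisfy ‖G − ∇S(y)‖ ≤ σ/w and ‖P_η^g(y; G)‖ ≥ δ/w, and set y⁺ = prox_{ηg}(y − η G). Then S(y) + g(y) − S(y⁺) − g(y⁺) ≥ ((1 − η(L+1))·η·δ² − σ²)/(2w²). -/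
/-!
With `p = P_η^g(y; G)` we have `y⁺ = y - η p`. Testing the prox optimality of `y⁺` against
`z = y` gives `g(y⁺) ≤ g(y) + η⟪G, p⟫ - (η/2)‖p‖²` (convexity of `dom g` keeps the segment
`[y, y⁺]` inside the region where `∇S` is `L`-Lipschitz), and the descent lemma gives
`S(y⁺) ≤ S(y) - η⟪∇S(y), p⟫ + (L/2)η²‖p‖²`. Adding, the gradient error enters only through
`η⟪G - ∇S(y), p⟫ ≤ ½‖G - ∇S(y)‖² + ½η²‖p‖²`, so the objective drops by at least
`½η(1 - η(L+1))‖p‖² - ½‖G - ∇S(y)‖²`; the bounds on the residual and the error finish.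
-/

noncomputable section

open Finset MeasureTheory
open scoped RealInnerProductSpace

/-- Descent lemma. The auxiliary function
`φ t = S(a + t(b - a)) - t⟪∇S(a), b - a⟫ - (L/2)t²‖b - a‖²` is antitone on `[0, 1]`. -/
theorem Convex.le_add_inner_add_sq_of_gradient_lipschitz {E : Type*} [NormedAddCommGroup E]
    [InnerProductSpace ℝ E] [CompleteSpace E] {s : Set E} (hs : Convex ℝ s)
    {S : E → ℝ} {S' : E → E} (hgrad : ∀ x ∈ s, HasGradientAt S (S' x) x) {L : ℝ}
    (hlip : ∀ x ∈ s, ∀ y ∈ s, ‖S' x - S' y‖ ≤ L * ‖x - y‖) {a b : E} (ha : a ∈ s) (hb : b ∈ s) :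
    S b ≤ S a + ⟪S' a, b - a⟫ + L / 2 * ‖b - a‖ ^ 2 := by
  set c : ℝ → E := fun t => a + t • (b - a)
  have hc_mem : ∀ t ∈ Set.Icc (0 : ℝ) 1, c t ∈ s := fun t ht => hs.add_smul_sub_mem ha hb ht
  set φ : ℝ → ℝ := fun t => S (c t) - t * ⟪S' a, b - a⟫ - L * t ^ 2 / 2 * ‖b - a‖ ^ 2
  have hφ : ∀ t ∈ Set.Icc (0 : ℝ) 1,
      HasDerivAt φ (⟪S' (c t), b - a⟫ - ⟪S' a, b - a⟫ - L * t * ‖b - a‖ ^ 2) t := by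
    intro t ht
    have hc : HasDerivAt c (b - a) t := by
      simpa [c] using ((hasDerivAt_id t).smul_const (b - a)).const_add a
    have hSc : HasDerivAt (fun s => S (c s)) ⟪S' (c t), b - a⟫ t := by
      have h := (hgrad _ (hc_mem t ht)).hasFDerivAt.comp_hasDerivAt t hc
      rwa [InnerProductSpace.toDual_apply_apply] at h
    have hlin : HasDerivAt (fun s : ℝ => s * ⟪S' a, b - a⟫) ⟪S' a, b - a⟫ t := by
      simpa using (hasDerivAt_id t).mul_const ⟪S' a, b - a⟫
    have hquad : HasDerivAt (fun s : ℝ => L * s ^ 2 / 2 * ‖b - a‖ ^ 2) (L * t * ‖b - a‖ ^ 2) t :=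
      ((((hasDerivAt_pow 2 t).const_mul L).div_const 2).mul_const _).congr_deriv (by ring)
    exact (hSc.sub hlin).sub hquad
  have hanti : AntitoneOn φ (Set.Icc 0 1) := by
    apply antitoneOn_of_deriv_nonpos (convex_Icc 0 1)
    · exact fun t ht => (hφ t ht).continuousAt.continuousWithinAt
    · exact fun t ht => (hφ t (interior_subset ht)).differentiableAt.differentiableWithinAt
    · intro t ht
      have ht' := interior_subset ht
      rw [(hφ t ht').deriv, ← inner_sub_left]
      have hct : ‖S' (c t) - S' a‖ ≤ L * (t * ‖b - a‖) := by
        simpa [c, norm_smul, abs_of_nonneg ht'.1] using hlip _ (hc_mem t ht') a ha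
      calc ⟪S' (c t) - S' a, b - a⟫ - L * t * ‖b - a‖ ^ 2
          ≤ ‖S' (c t) - S' a‖ * ‖b - a‖ - L * (t * ‖b - a‖) * ‖b - a‖ := by
            nlinarith [real_inner_le_norm (S' (c t) - S' a) (b - a)]
        _ ≤ 0 := by nlinarith [norm_nonneg (b - a)]
  have h01 := hanti (Set.left_mem_Icc.mpr zero_le_one) (Set.right_mem_Icc.mpr zero_le_one)
    zero_le_one
  simp only [φ, c, zero_smul, add_zero, one_smul, add_sub_cancel] at h01
  linarith

theorem ProperConvexLsc.convex_dom {n : ℕ} {g : EuclideanSpace ℝ (Fin n) → WithTop ℝ}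
    (hg : ProperConvexLsc g) : Convex ℝ {x | g x ≠ ⊤} := by
  intro x hx y hy a b ha hb hab
  obtain ⟨gx, hgx⟩ := WithTop.ne_top_iff_exists.mp hx
  obtain ⟨gy, hgy⟩ := WithTop.ne_top_iff_exists.mp hy
  have h := hg.2.2 x y a b ha hb hab
  rw [← hgx, ← hgy, ← WithTop.coe_mul, ← WithTop.coe_mul, ← WithTop.coe_add] at h
  exact ne_top_of_le_ne_top WithTop.coe_ne_top h

theorem IsProxPt.exists_eq_coe_and_le {n : ℕ} {g : EuclideanSpace ℝ (Fin n) → WithTop ℝ}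
    {η : ℝ} (hη : 0 < η) {u p z : EuclideanSpace ℝ (Fin n)} (hp : IsProxPt g η u p) {a : ℝ}
    (hz : g z = a) :
    ∃ b : ℝ, g p = b ∧ η * b + 1 / 2 * ‖u - p‖ ^ 2 ≤ η * a + 1 / 2 * ‖u - z‖ ^ 2 := by
  have h := hp z
  rw [hz, ← WithTop.coe_mul, ← WithTop.coe_add] at h
  have hfin : g p ≠ ⊤ := by
    intro htop
    rw [htop, WithTop.mul_top (by exact_mod_cast hη.ne'), top_add, top_le_iff] at h
    exact WithTop.coe_ne_top h
  obtain ⟨b, hb⟩ := WithTop.ne_top_iff_exists.mp hfin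
  rw [← hb, ← WithTop.coe_mul, ← WithTop.coe_add, WithTop.coe_le_coe] at h
  exact ⟨b, hb.symm, h⟩

theorem sub_smul_proxRes {n : ℕ} (prox : EuclideanSpace ℝ (Fin n) → EuclideanSpace ℝ (Fin n))
    {η : ℝ} (hη : η ≠ 0) (x d : EuclideanSpace ℝ (Fin n)) :
    x - η • proxRes prox η x d = prox (x - η • d) := by
  rw [proxRes, smul_smul, mul_inv_cancel₀ hη, one_smul, sub_sub_cancel]

theorem IsProxFun.exists_eq_coe_and_le_sub_sq_proxRes {n : ℕ}
    {g : EuclideanSpace ℝ (Fin n) → WithTop ℝ} {η : ℝ} (hη : 0 < η)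
    {prox : EuclideanSpace ℝ (Fin n) → EuclideanSpace ℝ (Fin n)} (hprox : IsProxFun g η prox)
    {y : EuclideanSpace ℝ (Fin n)} {a : ℝ} (hy : g y = a) (G : EuclideanSpace ℝ (Fin n)) :
    ∃ b : ℝ, g (prox (y - η • G)) = b ∧
      b ≤ a + η * ⟪G, proxRes prox η y G⟫ - η / 2 * ‖proxRes prox η y G‖ ^ 2 := by
  set p := proxRes prox η y G
  obtain ⟨b, hb, hle⟩ := (hprox (y - η • G)).1.exists_eq_coe_and_le hη hy
  refine ⟨b, hb, ?_⟩
  have hstep : y - η • G - prox (y - η • G) = η • (p - G) := by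
    rw [← sub_smul_proxRes prox hη.ne' y G, smul_sub]; abel
  rw [hstep, sub_sub_cancel_left, norm_neg, norm_smul, norm_smul, Real.norm_eq_abs,
    abs_of_pos hη, mul_pow, mul_pow, norm_sub_sq_real, real_inner_comm] at hle
  have hη_mul : η * b ≤ η * (a + η * ⟪G, p⟫ - η / 2 * ‖p‖ ^ 2) := by nlinarith
  exact le_of_mul_le_mul_left hη_mul hη

theorem proxGrad_sufficient_decrease {n : ℕ} {g : EuclideanSpace ℝ (Fin n) → WithTop ℝ}
    (hg : ProperConvexLsc g) {η : ℝ} (hη : 0 < η)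
    {prox : EuclideanSpace ℝ (Fin n) → EuclideanSpace ℝ (Fin n)} (hprox : IsProxFun g η prox)
    {S : EuclideanSpace ℝ (Fin n) → ℝ} {S' : EuclideanSpace ℝ (Fin n) → EuclideanSpace ℝ (Fin n)}
    (hgrad : ∀ x, HasGradientAt S (S' x) x) {L : ℝ}
    (hsmooth : ∀ x y : EuclideanSpace ℝ (Fin n), g x ≠ ⊤ → g y ≠ ⊤ →
      ‖S' x - S' y‖ ≤ L * ‖x - y‖)
    {y : EuclideanSpace ℝ (Fin n)} {a : ℝ} (hy : g y = a) (G : EuclideanSpace ℝ (Fin n)) :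
    ∃ b : ℝ, g (prox (y - η • G)) = b ∧
      η * (1 - η * (L + 1)) / 2 * ‖proxRes prox η y G‖ ^ 2 - ‖G - S' y‖ ^ 2 / 2 ≤
        S y + a - S (prox (y - η • G)) - b := by
  obtain ⟨b, hb, hg_le⟩ := hprox.exists_eq_coe_and_le_sub_sq_proxRes hη hy G
  refine ⟨b, hb, ?_⟩
  rw [← sub_smul_proxRes prox hη.ne'] at hb ⊢
  set p := proxRes prox η y G
  have hS_le : S (y - η • p) ≤ S y + ⟪S' y, y - η • p - y⟫ + L / 2 * ‖y - η • p - y‖ ^ 2 :=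
    hg.convex_dom.le_add_inner_add_sq_of_gradient_lipschitz (fun x _ => hgrad x)
      (fun x hx z hz => hsmooth x z hx hz) (by simp [hy]) (by simp [hb])
  rw [sub_sub_cancel_left, inner_neg_right, real_inner_smul_right, norm_neg, norm_smul,
    Real.norm_eq_abs, abs_of_pos hη] at hS_le
  have hyoung : η * ⟪G - S' y, p⟫ ≤ ‖G - S' y‖ ^ 2 / 2 + η ^ 2 * ‖p‖ ^ 2 / 2 := by
    nlinarith [real_inner_le_norm (G - S' y) p, sq_nonneg (‖G - S' y‖ - η * ‖p‖)]
  rw [inner_sub_left] at hyoung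
  nlinarith

theorem stmt12_general {n : ℕ} (g : EuclideanSpace ℝ (Fin n) → WithTop ℝ)
    (hg : ProperConvexLsc g)
    (prox : EuclideanSpace ℝ (Fin n) → EuclideanSpace ℝ (Fin n))
    (L η δ σ w : ℝ) (hη : 0 < η) (hη' : η < 1 / (L + 1))
    (hδ : 0 < δ) (hw : 1 ≤ w)
    (hprox : IsProxFun g η prox)
    (S : EuclideanSpace ℝ (Fin n) → ℝ) (S' : EuclideanSpace ℝ (Fin n) → EuclideanSpace ℝ (Fin n))
    (hgrad : ∀ x, HasGradientAt S (S' x) x)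
    (hsmooth : ∀ x y : EuclideanSpace ℝ (Fin n), g x ≠ ⊤ → g y ≠ ⊤ →
      ‖S' x - S' y‖ ≤ L * ‖x - y‖)
    (y G yp : EuclideanSpace ℝ (Fin n)) (hy : g y ≠ ⊤)
    (herr : ‖G - S' y‖ ≤ σ / w) (hres : δ / w ≤ ‖proxRes prox η y G‖)
    (hyp : yp = prox (y - η • G)) :
    ((S yp : ℝ) : WithTop ℝ) + g yp +
        ((((1 - η * (L + 1)) * η * δ ^ 2 - σ ^ 2) / (2 * w ^ 2) : ℝ) : WithTop ℝ) ≤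
      ((S y : ℝ) : WithTop ℝ) + g y := by
  have hL1 : 0 < L + 1 := by
    by_contra! h
    linarith [one_div_nonpos.mpr h]
  have hgap : 0 ≤ η * (1 - η * (L + 1)) / 2 := by
    have := (lt_div_iff₀ hL1).mp hη'
    nlinarith
  obtain ⟨a, ha⟩ := WithTop.ne_top_iff_exists.mp hy
  obtain ⟨b, hb, hdecr⟩ := proxGrad_sufficient_decrease hg hη hprox hgrad hsmooth ha.symm G
  rw [hyp, ← ha, hb, ← WithTop.coe_add, ← WithTop.coe_add, ← WithTop.coe_add,
    WithTop.coe_le_coe]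
  have hres_sq : (δ / w) ^ 2 ≤ ‖proxRes prox η y G‖ ^ 2 :=
    pow_le_pow_left₀ (by positivity) hres 2
  have herr_sq : ‖G - S' y‖ ^ 2 ≤ (σ / w) ^ 2 := pow_le_pow_left₀ (norm_nonneg _) herr 2
  have hbound : ((1 - η * (L + 1)) * η * δ ^ 2 - σ ^ 2) / (2 * w ^ 2)
      = η * (1 - η * (L + 1)) / 2 * (δ / w) ^ 2 - (σ / w) ^ 2 / 2 := by
    field_simp
  nlinarith [mul_le_mul_of_nonneg_left hres_sq hgap]

/-- bounded-error sufficient decrease, key step of Theorem 5: if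
`‖G − ∇S(y)‖ ≤ σ/w` and `‖P_η^g(y; G)‖ ≥ δ/w`, then with `y⁺ = prox_{ηg}(y − ηG)`,
`S(y) + g(y) − S(y⁺) − g(y⁺) ≥ ((1 − η(L+1))ηδ² − σ²)/(2w²)`. -/
theorem stmt12 {n : ℕ} (g : EuclideanSpace ℝ (Fin n) → WithTop ℝ)
    (hg : ProperConvexLsc g)
    (prox : EuclideanSpace ℝ (Fin n) → EuclideanSpace ℝ (Fin n))
    (L η δ σ w : ℝ) (hL : 0 < L) (hη : 0 < η) (hη' : η < 1 / (L + 1))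
    (hδ : 0 < δ) (hσ : 0 < σ) (hw : 1 ≤ w)
    (hprox : IsProxFun g η prox)
    (S : EuclideanSpace ℝ (Fin n) → ℝ) (S' : EuclideanSpace ℝ (Fin n) → EuclideanSpace ℝ (Fin n))
    (hgrad : ∀ x, HasGradientAt S (S' x) x)
    (hsmooth : ∀ x y : EuclideanSpace ℝ (Fin n), g x ≠ ⊤ → g y ≠ ⊤ →
      ‖S' x - S' y‖ ≤ L * ‖x - y‖)
    (y G yp : EuclideanSpace ℝ (Fin n)) (hy : g y ≠ ⊤)
    (herr : ‖G - S' y‖ ≤ σ / w) (hres : δ / w ≤ ‖proxRes prox η y G‖)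
    (hyp : yp = prox (y - η • G)) :
    ((S yp : ℝ) : WithTop ℝ) + g yp +
        ((((1 - η * (L + 1)) * η * δ ^ 2 - σ ^ 2) / (2 * w ^ 2) : ℝ) : WithTop ℝ) ≤
      ((S y : ℝ) : WithTop ℝ) + g y :=
  stmt12_general g hg prox L η δ σ w hη hη' hδ hw hprox S S' hgrad hsmooth y G yp hy herr hres hyp
end
end
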